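/- Let E = EuclideanSpace ℝ (Fin m) and let Q : E → ℝ be twice continuously differentiable with Hessian H(u) := ∇²Q(u) satisfying ‖H(u) − H(v)‖ ≤ L₂·‖u − v‖ for all u, v (L₂ > 0) and ∇Q(u_ref) = 0. Let W := −H(u_ref), 𝒮 := {u : W(u − u_ref, u − u_ref) ≤ D²} with D > 0, assume H(u)(v,v) ≤ −μ²·‖v‖² for all u ∈ 𝒮 and all v (μ > 0), and let G ≥ 0 satisfy ‖∇Q(u)‖ ≤ G for all u ∈ 𝒮. Let 𝒰 ⊆ E be convex, let u_W ∈ 𝒰 minimize u ↦ W(u − u_ref, u − u_ref) over 𝒰, let û_W ∈ 𝒰 minimize u ↦ Ŵ(u − u_ref, u − u_ref) over 𝒰 for a symmetric bilinear form Ŵ with ‖Ŵ − W‖ ≤ ρ, 0 ≤ ρ < μ², and let u_I ∈ 𝒰. Assume u_W, û_W, u_I ∈ 𝒮 and the segment from u_W to û_W lies in 𝒮. Write δ := ‖u_W − u_ref‖_W > 0, suppose ‖u_I − u_ref‖_W = β·δ for some β > 1, and set c := (β² − 1)/2. Then Q(û_W) − Q(u_I) ≥ c·δ² − L₂·D³/(3·μ³)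 − G·√(2ρ)·D/μ². -/

import Mathlib

/-!
A Lipschitz Hessian gives the cubic Taylor remainder
`|Q u - Q u_ref + W(u - u_ref, u - u_ref)/2| ≤ L₂‖u - u_ref‖³/6`, and coercivity of `W` gives
`‖u - u_ref‖ ≤ D/μ` on `𝒮`; comparing `u_W` with `u_I` this way yields `c δ² - L₂D³/(3μ³)`.
The learned projection stays close to the ideal one: with `d = û_W - u_W`, the variational
inequality at `u_W` gives `W(d, d) ≤ W(û_W - u_ref)² - W(u_W - u_ref)²`, and optimality of `û_W`
for `Ŵ` bounds this by `ρ(‖û_W - u_ref‖² + ‖u_W - u_ref‖²) ≤ 2ρD²/μ²`, whence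
`‖d‖ ≤ √(2ρ)D/μ²`. The mean value inequality on the segment `[u_W, û_W]` then costs at most `G‖d‖`.
-/

open Set

theorem norm_le_of_norm_deriv_le_mul_pow {E : Type*} [NormedAddCommGroup E] [NormedSpace ℝ E]
    {f f' : ℝ → E} {C : ℝ} (n : ℕ) (hf : ∀ t, HasDerivAt f (f' t) t) (h0 : f 0 = 0)
    (hbound : ∀ t, 0 ≤ t → ‖f' t‖ ≤ C * t ^ n) {x : ℝ} (hx : 0 ≤ x) :
    ‖f x‖ ≤ C * x ^ (n + 1) / (n + 1) := by
  have hB : ∀ t, HasDerivAt (fun s => C * s ^ (n + 1) / (n + 1)) (C * t ^ n) t := fun t => by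
    refine (((hasDerivAt_pow (n + 1) t).const_mul C).div_const ((n : ℝ) + 1)).congr_deriv ?_
    push_cast
    field_simp
  refine image_norm_le_of_norm_deriv_right_le_deriv_boundary
    (fun t _ => (hf t).continuousAt.continuousWithinAt) (fun t _ => (hf t).hasDerivWithinAt)
    (by simp [h0]) hB (fun t ht => hbound t ht.1) ⟨hx, le_rfl⟩

theorem abs_sub_taylor_two_le {g g' g'' : ℝ → ℝ} {K : ℝ} (hg : ∀ t, HasDerivAt g (g' t) t)
    (hg' : ∀ t, HasDerivAt g' (g'' t) t) (hK : ∀ t, 0 ≤ t → |g'' t - g'' 0| ≤ K * t)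
    {x : ℝ} (hx : 0 ≤ x) :
    |g x - g 0 - g' 0 * x - g'' 0 / 2 * x ^ 2| ≤ K * x ^ 3 / 6 := by
  have hderiv : ∀ t, HasDerivAt (fun s => g' s - g' 0 - g'' 0 * s) (g'' t - g'' 0) t := fun t =>
    (((hg' t).sub_const (g' 0)).sub ((hasDerivAt_id' t).const_mul (g'' 0))).congr_deriv
      (by ring)
  have hfirst : ∀ t, 0 ≤ t → ‖g' t - g' 0 - g'' 0 * t‖ ≤ K / 2 * t ^ 2 := fun t ht => by
    have := norm_le_of_norm_deriv_le_mul_pow 1 hderiv (by simp) (by simpa using hK) ht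
    convert this using 1; push_cast; ring
  have hφ : ∀ t, HasDerivAt (fun s => g s - g 0 - g' 0 * s - g'' 0 / 2 * s ^ 2)
      (g' t - g' 0 - g'' 0 * t) t := fun t =>
    ((((hg t).sub_const (g 0)).sub ((hasDerivAt_id' t).const_mul (g' 0))).sub
      ((hasDerivAt_pow 2 t).const_mul (g'' 0 / 2))).congr_deriv (by ring)
  have := norm_le_of_norm_deriv_le_mul_pow 2 hφ (by simp) hfirst hx
  rw [Real.norm_eq_abs] at this
  convert this using 1; norm_num; ring

theorem abs_sub_taylor_two_le_of_lipschitz_hessian {E : Type*} [NormedAddCommGroup E]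
    [NormedSpace ℝ E] {Q : E → ℝ} {Q' : E → E →L[ℝ] ℝ} {H : E → E →L[ℝ] E →L[ℝ] ℝ} {L : ℝ}
    (hQ : ∀ u, HasFDerivAt Q (Q' u) u) (hQ' : ∀ u, HasFDerivAt Q' (H u) u)
    (hLip : ∀ u v, ‖H u - H v‖ ≤ L * ‖u - v‖) (r u : E) :
    |Q u - Q r - Q' r (u - r) - H r (u - r) (u - r) / 2| ≤ L * ‖u - r‖ ^ 3 / 6 := by
  set v := u - r
  have hline : ∀ t : ℝ, HasDerivAt (fun s : ℝ => r + s • v) v t := fun t => by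
    simpa using ((hasDerivAt_id t).smul_const v).const_add r
  have hg : ∀ t : ℝ, HasDerivAt (fun s => Q (r + s • v)) (Q' (r + t • v) v) t := fun t =>
    (hQ _).comp_hasDerivAt t (hline t)
  have hg' : ∀ t : ℝ, HasDerivAt (fun s => Q' (r + s • v) v) (H (r + t • v) v v) t := fun t => by
    simpa using ((hQ' _).comp_hasDerivAt t (hline t)).clm_apply (hasDerivAt_const t v)
  have hK : ∀ t : ℝ, 0 ≤ t → |H (r + t • v) v v - H (r + (0 : ℝ) • v) v v| ≤ L * ‖v‖ ^ 3 * t :=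
    fun t ht => calc
      |H (r + t • v) v v - H (r + (0 : ℝ) • v) v v| = ‖(H (r + t • v) - H r) v v‖ := by simp
      _ ≤ ‖H (r + t • v) - H r‖ * ‖v‖ * ‖v‖ := ContinuousLinearMap.le_opNorm₂ _ _ _
      _ ≤ L * ‖r + t • v - r‖ * ‖v‖ * ‖v‖ := by gcongr; exact hLip _ _
      _ = L * ‖v‖ ^ 3 * t := by simp [norm_smul, abs_of_nonneg ht]; ring
  simpa [v] using abs_sub_taylor_two_le hg hg' hK zero_le_one

theorem le_sub_of_lipschitz_hessian {E : Type*} [NormedAddCommGroup E] [NormedSpace ℝ E]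
    {Q : E → ℝ} {Q' : E → E →L[ℝ] ℝ} {H : E → E →L[ℝ] E →L[ℝ] ℝ} {L R : ℝ}
    (hQ : ∀ u, HasFDerivAt Q (Q' u) u) (hQ' : ∀ u, HasFDerivAt Q' (H u) u)
    (hLip : ∀ u v, ‖H u - H v‖ ≤ L * ‖u - v‖) (hL : 0 ≤ L) {r u v : E} (hcrit : Q' r = 0)
    (hu : ‖u - r‖ ≤ R) (hv : ‖v - r‖ ≤ R) :
    (H r (u - r) (u - r) - H r (v - r) (v - r)) / 2 - L * R ^ 3 / 3 ≤ Q u - Q v := by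
  have htaylor : ∀ w, ‖w - r‖ ≤ R → |Q w - Q r - H r (w - r) (w - r) / 2| ≤ L * R ^ 3 / 6 :=
    fun w hw => by
      have := abs_sub_taylor_two_le_of_lipschitz_hessian hQ hQ' hLip r w
      rw [hcrit, zero_apply, sub_zero] at this
      exact this.trans (by gcongr)
  linarith [(abs_le.1 (htaylor u hu)).1, (abs_le.1 (htaylor v hv)).2]

theorem LinearMap.BilinForm.apply_add_apply_le_of_forall_le {E : Type*} [AddCommGroup E]
    [Module ℝ E] (B : LinearMap.BilinForm ℝ E) {K : Set E} (hK : Convex ℝ K) {r u w : E}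
    (hu : u ∈ K) (hmin : ∀ v ∈ K, B (u - r) (u - r) ≤ B (v - r) (v - r)) (hw : w ∈ K) :
    B (u - r) (u - r) + B (w - u) (w - u) ≤ B (w - r) (w - r) := by
  set a := B (u - r) (w - u) + B (w - u) (u - r)
  set q := B (w - u) (w - u)
  have hexpand : ∀ t : ℝ, B (u + t • (w - u) - r) (u + t • (w - u) - r)
      = B (u - r) (u - r) + t * a + t ^ 2 * q := fun t => by
    rw [show u + t • (w - u) - r = (u - r) + t • (w - u) by abel]
    simp only [map_add, map_smul, LinearMap.add_apply, LinearMap.smul_apply, smul_eq_mul, a, q]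
    ring
  have hslope : ∀ t ∈ Ioc (0 : ℝ) 1, 0 ≤ a + t * q := fun t ht => by
    have hmem : u + t • (w - u) ∈ K := by
      simpa using hK.add_smul_sub_mem hu hw ⟨ht.1.le, ht.2⟩
    have := hmin _ hmem
    rw [hexpand] at this
    nlinarith [ht.1]
  -- `a` is the right derivative at `t = 0` of the objective along the segment from `u` to `w`.
  have ha : 0 ≤ a := by
    have hlim : Filter.Tendsto (fun t : ℝ => a + t * q) (nhdsWithin 0 (Ioi 0)) (nhds a) := by
      have : Continuous fun t : ℝ => a + t * q := by fun_prop
      simpa using (this.tendsto 0).mono_left nhdsWithin_le_nhds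
    refine ge_of_tendsto hlim ?_
    filter_upwards [Ioc_mem_nhdsGT zero_lt_one] with t ht using hslope t ht
  have := hexpand 1
  simp only [one_smul, one_mul, one_pow, add_sub_cancel] at this
  linarith

theorem ContinuousLinearMap.abs_apply_apply_sub_le {E : Type*} [SeminormedAddCommGroup E]
    [NormedSpace ℝ E] (B B' : E →L[ℝ] E →L[ℝ] ℝ) (v : E) :
    |B v v - B' v v| ≤ ‖B - B'‖ * ‖v‖ ^ 2 := by
  rw [← Real.norm_eq_abs, sq, ← mul_assoc]
  simpa using (B - B').le_opNorm₂ v v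

theorem le_div_of_sq_mul_sq_le {μ x D : ℝ} (hμ : 0 < μ) (hx : 0 ≤ x) (hD : 0 ≤ D)
    (h : μ ^ 2 * x ^ 2 ≤ D ^ 2) : x ≤ D / μ := by
  rw [le_div_iff₀ hμ, mul_comm]
  exact (pow_le_pow_iff_left₀ (by positivity) hD two_ne_zero).1 (by rwa [mul_pow])

theorem norm_sub_le_of_minimizers_of_norm_sub_le {E : Type*} [NormedAddCommGroup E]
    [NormedSpace ℝ E] {B B' : E →L[ℝ] E →L[ℝ] ℝ} {K : Set E} (hK : Convex ℝ K) {μ ρ R : ℝ}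
    (hμ : 0 < μ) (hcoer : ∀ v, μ ^ 2 * ‖v‖ ^ 2 ≤ B v v) (hρ : ‖B' - B‖ ≤ ρ) {r u u' : E}
    (hu : u ∈ K) (hu' : u' ∈ K) (hmin : ∀ v ∈ K, B (u - r) (u - r) ≤ B (v - r) (v - r))
    (hmin' : ∀ v ∈ K, B' (u' - r) (u' - r) ≤ B' (v - r) (v - r))
    (hR : ‖u - r‖ ≤ R) (hR' : ‖u' - r‖ ≤ R) :
    ‖u' - u‖ ≤ √(2 * ρ) * R / μ := by
  have hρ0 : 0 ≤ ρ := (norm_nonneg (B' - B)).trans hρ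
  have hpert : ∀ v, ‖v‖ ≤ R → |B' v v - B v v| ≤ ρ * R ^ 2 := fun v hv =>
    (B'.abs_apply_apply_sub_le B v).trans (by gcongr)
  have hvar : B (u - r) (u - r) + B (u' - u) (u' - u) ≤ B (u' - r) (u' - r) := by
    simpa using LinearMap.BilinForm.apply_add_apply_le_of_forall_le B.toLinearMap₁₂ hK hu
      (by simpa using hmin) hu'
  have hq : B (u' - u) (u' - u) ≤ (√(2 * ρ) * R) ^ 2 := by
    rw [mul_pow, Real.sq_sqrt (by positivity)]
    linarith [hmin' u hu, (abs_le.1 (hpert _ hR)).2, (abs_le.1 (hpert _ hR')).1]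
  exact le_div_of_sq_mul_sq_le hμ (norm_nonneg _)
    (mul_nonneg (Real.sqrt_nonneg _) ((norm_nonneg _).trans hR)) ((hcoer _).trans hq)

theorem learned_weighted_vs_euclidean_gap_general
    (m : ℕ)
    (Q : EuclideanSpace ℝ (Fin m) → ℝ)
    (hQ : ContDiff ℝ 2 Q)
    (u_ref : EuclideanSpace ℝ (Fin m))
    (H : EuclideanSpace ℝ (Fin m) →
      EuclideanSpace ℝ (Fin m) →L[ℝ] EuclideanSpace ℝ (Fin m) →L[ℝ] ℝ)
    (hH : ∀ u, H u = fderiv ℝ (fderiv ℝ Q) u)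
    (L₂ : ℝ) (hL₂ : 0 < L₂)
    (hLip : ∀ u v, ‖H u - H v‖ ≤ L₂ * ‖u - v‖)
    (hgrad : fderiv ℝ Q u_ref = 0)
    (W : EuclideanSpace ℝ (Fin m) →L[ℝ] EuclideanSpace ℝ (Fin m) →L[ℝ] ℝ)
    (hW : W = -H u_ref)
    (D : ℝ) (hD : 0 < D)
    (S : Set (EuclideanSpace ℝ (Fin m)))
    (hS : S = {u | W (u - u_ref) (u - u_ref) ≤ D ^ 2})
    (μ : ℝ) (hμ : 0 < μ)
    (hcurv : ∀ u ∈ S, ∀ v : EuclideanSpace ℝ (Fin m),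
      H u v v ≤ -μ ^ 2 * ‖v‖ ^ 2)
    (G : ℝ)
    (hGbound : ∀ u ∈ S, ‖fderiv ℝ Q u‖ ≤ G)
    (𝒰 : Set (EuclideanSpace ℝ (Fin m))) (h𝒰 : Convex ℝ 𝒰)
    (uW uI uhW : EuclideanSpace ℝ (Fin m))
    (huW𝒰 : uW ∈ 𝒰) (huhW𝒰 : uhW ∈ 𝒰)
    (huWmin : ∀ u ∈ 𝒰, W (uW - u_ref) (uW - u_ref) ≤ W (u - u_ref) (u - u_ref))
    (Wh : EuclideanSpace ℝ (Fin m) →L[ℝ] EuclideanSpace ℝ (Fin m) →L[ℝ] ℝ)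
    (ρ : ℝ)
    (herr : ‖Wh - W‖ ≤ ρ)
    (huhWmin : ∀ u ∈ 𝒰,
      Wh (uhW - u_ref) (uhW - u_ref) ≤ Wh (u - u_ref) (u - u_ref))
    (huWS : uW ∈ S) (huhWS : uhW ∈ S) (huIS : uI ∈ S)
    (hseg : segment ℝ uW uhW ⊆ S)
    (δ : ℝ) (hδ : δ = Real.sqrt (W (uW - u_ref) (uW - u_ref)))
    (β : ℝ)
    (hβδ : Real.sqrt (W (uI - u_ref) (uI - u_ref)) = β * δ)
    (c : ℝ) (hc : c = (β ^ 2 - 1) / 2) :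
    Q uhW - Q uI ≥
      c * δ ^ 2 - L₂ * D ^ 3 / (3 * μ ^ 3)
        - G * Real.sqrt (2 * ρ) * D / μ ^ 2 := by
  have hQ' : ∀ u, HasFDerivAt Q (fderiv ℝ Q u) u := fun u =>
    (hQ.differentiable two_ne_zero u).hasFDerivAt
  have hQ'' : ∀ u, HasFDerivAt (fderiv ℝ Q) (H u) u := fun u =>
    hH u ▸ ((hQ.fderiv_right le_rfl).differentiable one_ne_zero u).hasFDerivAt
  have hHW : ∀ v, H u_ref v v = -W v v := by simp [hW]
  have hrefS : u_ref ∈ S := by simp [hS, sq_nonneg]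
  have hcoer : ∀ v, μ ^ 2 * ‖v‖ ^ 2 ≤ W v v := fun v => by
    linarith [hcurv u_ref hrefS v, hHW v]
  have hnormS : ∀ u ∈ S, ‖u - u_ref‖ ≤ D / μ := fun u hu =>
    le_div_of_sq_mul_sq_le hμ (norm_nonneg _) hD.le ((hcoer _).trans (by rwa [hS] at hu))
  have hWnonneg : ∀ v, 0 ≤ W v v := fun v => (by positivity : (0 : ℝ) ≤ _).trans (hcoer v)
  have hWuW : W (uW - u_ref) (uW - u_ref) = δ ^ 2 := by rw [hδ, Real.sq_sqrt (hWnonneg _)]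
  have hWuI : W (uI - u_ref) (uI - u_ref) = β ^ 2 * δ ^ 2 := by
    rw [← mul_pow, ← hβδ, Real.sq_sqrt (hWnonneg _)]
  have hfar := le_sub_of_lipschitz_hessian hQ' hQ'' hLip hL₂.le hgrad
    (hnormS uW huWS) (hnormS uI huIS)
  have hnear := norm_sub_le_of_minimizers_of_norm_sub_le h𝒰 hμ hcoer herr huW𝒰 huhW𝒰 huWmin
    huhWmin (hnormS uW huWS) (hnormS uhW huhWS)
  have hmv : ‖Q uhW - Q uW‖ ≤ G * ‖uhW - uW‖ :=
    (convex_segment uW uhW).norm_image_sub_le_of_norm_fderiv_le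
      (fun x _ => (hQ' x).differentiableAt) (fun x hx => hGbound x (hseg hx))
      (left_mem_segment ℝ uW uhW) (right_mem_segment ℝ uW uhW)
  have hG0 : 0 ≤ G := (norm_nonneg _).trans (hGbound u_ref hrefS)
  have hGnear : G * ‖uhW - uW‖ ≤ G * √(2 * ρ) * D / μ ^ 2 := by
    calc G * ‖uhW - uW‖ ≤ G * (√(2 * ρ) * (D / μ) / μ) := by gcongr
      _ = G * √(2 * ρ) * D / μ ^ 2 := by field_simp
  have hcube : L₂ * (D / μ) ^ 3 / 3 = L₂ * D ^ 3 / (3 * μ ^ 3) := by field_simp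
  rw [hHW, hHW, hWuW, hWuI, hcube] at hfar
  rw [hc]
  linarith [(abs_le.1 (Real.norm_eq_abs _ ▸ hmv)).1]

/-- Theorem 4: Comparison with Euclidean projection under
training error. With A1–A2, a gradient bound `G` on `𝒮`, and a learned
symmetric weighting `Ŵ` with `‖Ŵ − W‖ ≤ ρ < μ²`, the learned weighted
projection `û_W` satisfies
`Q(û_W) − Q(u_I) ≥ c·δ² − L₂D³/(3μ³) − G√(2ρ)D/μ²`. -/
theorem learned_weighted_vs_euclidean_gap
    (m : ℕ)
    (Q : EuclideanSpace ℝ (Fin m) → ℝ)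
    (hQ : ContDiff ℝ 2 Q)
    (u_ref : EuclideanSpace ℝ (Fin m))
    (H : EuclideanSpace ℝ (Fin m) →
      EuclideanSpace ℝ (Fin m) →L[ℝ] EuclideanSpace ℝ (Fin m) →L[ℝ] ℝ)
    (hH : ∀ u, H u = fderiv ℝ (fderiv ℝ Q) u)
    (L₂ : ℝ) (hL₂ : 0 < L₂)
    (hLip : ∀ u v, ‖H u - H v‖ ≤ L₂ * ‖u - v‖)
    (hgrad : fderiv ℝ Q u_ref = 0)
    (W : EuclideanSpace ℝ (Fin m) →L[ℝ] EuclideanSpace ℝ (Fin m) →L[ℝ] ℝ)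
    (hW : W = -H u_ref)
    (D : ℝ) (hD : 0 < D)
    (S : Set (EuclideanSpace ℝ (Fin m)))
    (hS : S = {u | W (u - u_ref) (u - u_ref) ≤ D ^ 2})
    (μ : ℝ) (hμ : 0 < μ)
    (hcurv : ∀ u ∈ S, ∀ v : EuclideanSpace ℝ (Fin m),
      H u v v ≤ -μ ^ 2 * ‖v‖ ^ 2)
    (G : ℝ) (hG0 : 0 ≤ G)
    (hGbound : ∀ u ∈ S, ‖fderiv ℝ Q u‖ ≤ G)
    (𝒰 : Set (EuclideanSpace ℝ (Fin m))) (h𝒰 : Convex ℝ 𝒰)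
    (uW uI uhW : EuclideanSpace ℝ (Fin m))
    (huW𝒰 : uW ∈ 𝒰) (huI𝒰 : uI ∈ 𝒰) (huhW𝒰 : uhW ∈ 𝒰)
    (huWmin : ∀ u ∈ 𝒰, W (uW - u_ref) (uW - u_ref) ≤ W (u - u_ref) (u - u_ref))
    (Wh : EuclideanSpace ℝ (Fin m) →L[ℝ] EuclideanSpace ℝ (Fin m) →L[ℝ] ℝ)
    (hWhsym : ∀ v w : EuclideanSpace ℝ (Fin m), Wh v w = Wh w v)
    (ρ : ℝ) (hρ0 : 0 ≤ ρ) (hρμ : ρ < μ ^ 2)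
    (herr : ‖Wh - W‖ ≤ ρ)
    (huhWmin : ∀ u ∈ 𝒰,
      Wh (uhW - u_ref) (uhW - u_ref) ≤ Wh (u - u_ref) (u - u_ref))
    (huWS : uW ∈ S) (huhWS : uhW ∈ S) (huIS : uI ∈ S)
    (hseg : segment ℝ uW uhW ⊆ S)
    (δ : ℝ) (hδ : δ = Real.sqrt (W (uW - u_ref) (uW - u_ref)))
    (hδpos : 0 < δ)
    (β : ℝ) (hβ : 1 < β)
    (hβδ : Real.sqrt (W (uI - u_ref) (uI - u_ref)) = β * δ)
    (c : ℝ) (hc : c = (β ^ 2 - 1) / 2) :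
    Q uhW - Q uI ≥
      c * δ ^ 2 - L₂ * D ^ 3 / (3 * μ ^ 3)
        - G * Real.sqrt (2 * ρ) * D / μ ^ 2 :=
  learned_weighted_vs_euclidean_gap_general m Q hQ u_ref H hH L₂ hL₂ hLip hgrad W hW D hD S hS μ hμ
    hcurv G hGbound 𝒰 h𝒰 uW uI uhW huW𝒰 huhW𝒰 huWmin Wh ρ herr huhWmin huWS huhWS huIS hseg δ hδ β
    hβδ c hc
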